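/- arXiv:2208.12583 — 2 statements merged into one kernel-verified Lean document; each statement's English description precedes it below -/
import Mathlib

section
/- For all integers 1 ≤ p, q ≤ N, the matrix identity C* C = S(p,q) holds, where C* denotes the conjugate transpose of C. In particular, C* C is a real symmetric matrix. -/
open Matrix Complex

/-- The matrix `C` with entries `C_{j,k} = exp(-2πi (j-(p+1)/2)(k-(q+1)/2)/N)` for
1-based `j, k`; with the 0-based indices used here the entry is
`exp(-2πi (j-(p-1)/2)(k-(q-1)/2)/N)`. -/
noncomputable def symC (N p q : ℕ) : Matrix (Fin p) (Fin q) ℂ :=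
  fun j k => Complex.exp (-(2 * (Real.pi : ℂ) * Complex.I) *
    (((j : ℕ) : ℂ) - ((p : ℂ) - 1) / 2) * (((k : ℕ) : ℂ) - ((q : ℂ) - 1) / 2) / (N : ℂ))

/-- The periodic prolate matrix `S(p,q) ∈ ℝ^{q×q}` with entries
`sin(pπ(j-k)/N)/sin(π(j-k)/N)` off the diagonal and `p` on the diagonal. -/
noncomputable def prolateS (N p q : ℕ) : Matrix (Fin q) (Fin q) ℝ :=
  fun j k => if j = k then (p : ℝ)
    else Real.sin ((p : ℝ) * Real.pi * (((j : ℕ) : ℝ) - ((k : ℕ) : ℝ)) / N) /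
         Real.sin (Real.pi * (((j : ℕ) : ℝ) - ((k : ℕ) : ℝ)) / N)

/-!
The `(j, k)` entry of `Cᴴ C` is `∑ₘ exp(2πi (m - (p-1)/2)(j - k)/N)`, a Dirichlet kernel: a
geometric sum symmetric about `0`, which after multiplication by `sin w`, `w = π(j - k)/N`,
telescopes to `sin(p w)`. Off the diagonal `0 < |j - k| < q ≤ N`, so `sin w ≠ 0`.
-/

theorem Complex.sum_range_exp_mul_sin (p : ℕ) (w : ℂ) :
    (∑ m ∈ Finset.range p, exp ((2 * m - (p - 1)) * w * I)) * sin w = sin (p * w) := by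
  have htelescope : ∀ m : ℕ, exp ((2 * m - (p - 1)) * w * I) * sin w =
      exp ((2 * m - p) * w * I) * I / 2 - exp ((2 * ((m + 1 : ℕ) : ℂ) - p) * w * I) * I / 2 := by
    intro m
    rw [Complex.sin, mul_div_assoc', ← mul_assoc, mul_sub, ← exp_add, ← exp_add, sub_mul, sub_div]
    push_cast
    ring_nf
  rw [Finset.sum_mul, Finset.sum_congr rfl fun m _ => htelescope m, Finset.sum_range_sub',
    Complex.sin]
  push_cast
  ring_nf

theorem Real.sin_pi_mul_div_ne_zero {d x : ℝ} (hd : d ≠ 0) (hdx : |d| < x) :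
    Real.sin (Real.pi * d / x) ≠ 0 := by
  have hx : 0 < x := (abs_nonneg d).trans_lt hdx
  obtain ⟨hlo, hhi⟩ := abs_lt.mp hdx
  rw [Ne, Real.sin_eq_zero_iff_of_lt_of_lt]
  · exact div_ne_zero (mul_ne_zero Real.pi_ne_zero hd) hx.ne'
  · rw [lt_div_iff₀ hx]; nlinarith [Real.pi_pos]
  · rw [div_lt_iff₀ hx]; nlinarith [Real.pi_pos]

theorem conjTranspose_symC_mul_symC_apply (N p q : ℕ) (j k : Fin q) :
    ((symC N p q)ᴴ * symC N p q) j k = ∑ m ∈ Finset.range p,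
      exp ((2 * m - (p - 1)) * ofReal (Real.pi * ((j : ℕ) - (k : ℕ)) / N) * I) := by
  rw [Matrix.mul_apply, ← Fin.sum_univ_eq_sum_range
    (fun m => exp ((2 * m - (p - 1)) * ofReal (Real.pi * ((j : ℕ) - (k : ℕ)) / N) * I))]
  refine Finset.sum_congr rfl fun m _ => ?_
  simp only [conjTranspose_apply, symC, star_def, ← exp_conj, ← exp_add, map_div₀, map_mul,
    map_neg, map_sub, map_ofNat, map_one, map_natCast, conj_ofReal, conj_I]
  push_cast
  ring_nf

theorem conjTranspose_symC_mul_symC_general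
    (N p q : ℕ) (hqN : q ≤ N) :
    (symC N p q)ᴴ * symC N p q = (prolateS N p q).map (Complex.ofReal) ∧
    ((symC N p q)ᴴ * symC N p q).IsHermitian ∧
    ∀ j k, ((symC N p q)ᴴ * symC N p q) j k ∈ Set.range (Complex.ofReal) := by
  have hS : (symC N p q)ᴴ * symC N p q = (prolateS N p q).map (Complex.ofReal) := by
    ext j k
    rw [conjTranspose_symC_mul_symC_apply, map_apply, prolateS]
    split_ifs with hjk
    · simp [hjk]
    have hsin : Real.sin (Real.pi * ((j : ℕ) - (k : ℕ)) / N) ≠ 0 :=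
      Real.sin_pi_mul_div_ne_zero (sub_ne_zero.mpr (by exact_mod_cast Fin.val_ne_of_ne hjk))
        (abs_sub_lt_of_nonneg_of_lt (Nat.cast_nonneg _) (by exact_mod_cast j.isLt.trans_le hqN)
          (Nat.cast_nonneg _) (by exact_mod_cast k.isLt.trans_le hqN))
    rw [show (p : ℝ) * Real.pi * ((j : ℕ) - (k : ℕ)) / N = p * (Real.pi * ((j : ℕ) - (k : ℕ)) / N)
      by ring, ofReal_div (Real.sin _), ofReal_sin, ofReal_sin, ofReal_mul, ofReal_natCast,
      eq_div_iff (by exact_mod_cast hsin), Complex.sum_range_exp_mul_sin]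
  exact ⟨hS, isHermitian_conjTranspose_mul_self _, fun j k => hS ▸ ⟨_, rfl⟩⟩

theorem conjTranspose_symC_mul_symC
    (N p q : ℕ) (hN : 0 < N) (hp1 : 1 ≤ p) (hpN : p ≤ N) (hq1 : 1 ≤ q) (hqN : q ≤ N) :
    (symC N p q)ᴴ * symC N p q = (prolateS N p q).map (Complex.ofReal) ∧
    ((symC N p q)ᴴ * symC N p q).IsHermitian ∧
    ∀ j k, ((symC N p q)ᴴ * symC N p q) j k ∈ Set.range (Complex.ofReal) :=
  conjTranspose_symC_mul_symC_general N p q hqN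
end

section
/- For every integer 1 ≤ p ≤ N, the matrix (1/N)·S(p,N) is an orthogonal projection: S(p,N)² = N·S(p,N) and S(p,N) is symmetric. Moreover its rank equals p (equivalently, trace S(p,N) = pN). -/
/-!
Let `F` be the `N × p` matrix of Fourier modes `F j m = exp(iπ(2m+1-p)j/N)`. The Dirichlet-kernel
identity `∑_{m<p} exp(i(2m+1-p)θ) = sin(pθ)/sin θ` gives `S(p,N) = F Fᴴ`. Columns `m ≠ m'` of `F`
differ entrywise by `j ↦ ζ^((m'-m)j)` with `ζ = exp(2πi/N)` and `0 < |m'-m| < N`, a geometric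
progression summing to zero, so `Fᴴ F = N·1`. Hence `S² = F (Fᴴ F) Fᴴ = N S`, so `S / N` is
idempotent and its rank equals its trace `p`.
-/

open Matrix Complex

theorem Matrix.rank_eq_trace_of_isIdempotentElem {K n : Type*} [Field K] [CharZero K]
    [Fintype n] [DecidableEq n] {P : Matrix n n K} (hP : IsIdempotentElem P) :
    (P.rank : K) = P.trace := by
  have he : IsIdempotentElem (toLin' P) := hP.map (toLinAlgEquiv' (R := K))
  rw [← trace_toLin'_eq, (LinearMap.IsIdempotentElem.isProj_range _ he).trace, toLin'_apply',
    rank]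

theorem Matrix.mul_rank_eq_trace_of_mul_self_eq_smul {K n : Type*} [Field K] [CharZero K]
    [Fintype n] [DecidableEq n] {A : Matrix n n K} {c : K} (hc : c ≠ 0)
    (hA : A * A = c • A) : c * A.rank = A.trace := by
  have hP : IsIdempotentElem (c⁻¹ • A) := by
    rw [IsIdempotentElem, smul_mul_smul_comm, hA, smul_smul, inv_mul_cancel_right₀ hc]
  have hrank := rank_eq_trace_of_isIdempotentElem hP
  rw [rank_smul_of_mem_nonZeroDivisors A (mem_nonZeroDivisors_of_ne_zero (inv_ne_zero hc)),
    trace_smul, smul_eq_mul] at hrank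
  rw [hrank, mul_inv_cancel_left₀ hc]

theorem IsPrimitiveRoot.geom_sum_zpow_eq_zero {K : Type*} [Field K] {ζ : K} {n : ℕ}
    (hζ : IsPrimitiveRoot ζ n) {d : ℤ} (hd : ¬ (n : ℤ) ∣ d) :
    ∑ j ∈ Finset.range n, (ζ ^ d) ^ j = 0 := by
  have hne : ζ ^ d ≠ 1 := mt (hζ.zpow_eq_one_iff_dvd d).1 hd
  have hpow : (ζ ^ d) ^ n = 1 := by
    rw [← zpow_natCast, ← _root_.zpow_mul, mul_comm, _root_.zpow_mul, zpow_natCast,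
      hζ.pow_eq_one, _root_.one_zpow]
  refine mul_left_cancel₀ (sub_ne_zero.2 hne.symm) ?_
  rw [mul_neg_geom_sum, hpow, sub_self, mul_zero]

open Finset in
theorem Complex.sin_mul_sum_range_exp_mul_I (p : ℕ) (θ : ℂ) :
    sin θ * ∑ m ∈ range p, exp ((2 * m + 1 - p) * θ * I) = sin (p * θ) := by
  set f : ℕ → ℂ := fun m => exp ((2 * m - p) * θ * I) * I / 2
  have hstep (m : ℕ) : sin θ * exp ((2 * m + 1 - p) * θ * I) = f m - f (m + 1) := by
    have h1 : exp ((2 * m + 1 - p) * θ * I) = exp ((2 * m - p) * θ * I) * exp (θ * I) := by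
      rw [← exp_add]; ring_nf
    have h2 : exp ((2 * ((m + 1 : ℕ) : ℂ) - p) * θ * I)
        = exp ((2 * m - p) * θ * I) * exp (θ * I) * exp (θ * I) := by
      rw [← exp_add, ← exp_add]; push_cast; ring_nf
    have h3 : exp (-θ * I) = (exp (θ * I))⁻¹ := by rw [← exp_neg]; ring_nf
    simp only [f, sin, h1, h2, h3]
    field_simp
  rw [mul_sum, sum_congr rfl fun m _ => hstep m, sum_range_sub']
  simp only [f, sin, CharP.cast_eq_zero]
  ring_nf

theorem Complex.exp_ofReal_mul_I_mul_star (x y : ℝ) :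
    exp (x * I) * star (exp (y * I)) = exp ((x - y : ℝ) * I) := by
  rw [star_def, ← exp_conj, ← exp_add]
  simp only [map_mul, conj_ofReal, conj_I]
  push_cast
  ring_nf

theorem Real.sin_pi_mul_sub_div_ne_zero {N : ℕ} {j k : Fin N} (h : j ≠ k) :
    Real.sin (Real.pi * (((j : ℕ) : ℝ) - (k : ℕ)) / N) ≠ 0 := by
  have hN : (0 : ℝ) < N := by exact_mod_cast j.pos
  have hjk : ((j : ℕ) : ℝ) ≠ k := by exact_mod_cast Fin.val_ne_of_ne h
  have hj : ((j : ℕ) : ℝ) < N := by exact_mod_cast j.isLt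
  have hk : ((k : ℕ) : ℝ) < N := by exact_mod_cast k.isLt
  rw [Ne, Real.sin_eq_zero_iff_of_lt_of_lt]
  · exact div_ne_zero (mul_ne_zero Real.pi_ne_zero (sub_ne_zero.2 hjk)) hN.ne'
  · rw [lt_div_iff₀ hN]; nlinarith [Real.pi_pos]
  · rw [div_lt_iff₀ hN]; nlinarith [Real.pi_pos]

theorem prolateS_isSymm (N p q : ℕ) : (prolateS N p q).IsSymm := by
  ext j k
  simp only [transpose_apply, prolateS, eq_comm (a := k)]
  split_ifs
  · rfl
  · rw [← neg_sub]
    simp only [mul_neg, neg_div, Real.sin_neg, div_neg, neg_neg]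

theorem prolateS_trace (N p q : ℕ) : (prolateS N p q).trace = p * q := by
  simp [trace, prolateS, mul_comm]

noncomputable def prolateFactor (N p : ℕ) : Matrix (Fin N) (Fin p) ℂ :=
  fun j m => exp ((Real.pi * (2 * m + 1 - p) * j / N : ℝ) * I)

theorem prolateFactor_mul_conjTranspose (N p : ℕ) :
    prolateFactor N p * (prolateFactor N p)ᴴ = (prolateS N p N).map ofRealHom := by
  ext j k
  set θ : ℝ := Real.pi * (((j : ℕ) : ℝ) - (k : ℕ)) / N
  have hterm (m : Fin p) : prolateFactor N p j m * star (prolateFactor N p k m)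
      = exp ((2 * (m : ℕ) + 1 - p) * (θ : ℂ) * I) := by
    rw [prolateFactor, prolateFactor, exp_ofReal_mul_I_mul_star]
    congr 1
    push_cast [θ]
    ring
  simp only [mul_apply, conjTranspose_apply, hterm, map_apply, prolateS]
  rw [Fin.sum_univ_eq_sum_range (fun m => exp ((2 * (m : ℂ) + 1 - p) * θ * I))]
  split_ifs with hjk
  · simp [θ, hjk]
  · have hsin : sin θ ≠ 0 := by
      rw [← ofReal_sin]
      exact ofReal_ne_zero.2 (Real.sin_pi_mul_sub_div_ne_zero hjk)
    rw [eq_div_of_mul_eq hsin ((mul_comm _ _).trans (sin_mul_sum_range_exp_mul_I p θ)),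
      ofRealHom_eq_coe]
    push_cast [θ]
    ring_nf

theorem conjTranspose_mul_prolateFactor {N p : ℕ} (hpN : p ≤ N) :
    (prolateFactor N p)ᴴ * prolateFactor N p = (N : ℂ) • 1 := by
  ext m m'
  have hN : N ≠ 0 := (m.pos.trans_le hpN).ne'
  have hN' : (N : ℂ) ≠ 0 := Nat.cast_ne_zero.2 hN
  set ζ := exp (2 * Real.pi * I / N)
  have hterm (j : Fin N) : star (prolateFactor N p j m) * prolateFactor N p j m'
      = (ζ ^ ((m' : ℤ) - m)) ^ (j : ℕ) := by
    rw [mul_comm, prolateFactor, prolateFactor, exp_ofReal_mul_I_mul_star, ← exp_int_mul,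
      ← exp_nat_mul]
    congr 1
    push_cast
    field_simp
    ring
  simp only [mul_apply, conjTranspose_apply, hterm, Matrix.smul_apply, one_apply]
  rw [Fin.sum_univ_eq_sum_range (fun j => (ζ ^ ((m' : ℤ) - m)) ^ j)]
  split_ifs with hmm
  · simp [hmm]
  · rw [smul_zero]
    refine (isPrimitiveRoot_exp N hN).geom_sum_zpow_eq_zero fun hdvd => hmm ?_
    have := Int.eq_zero_of_abs_lt_dvd hdvd (by rw [abs_lt]; omega)
    omega

theorem prolateS_mul_self {N p : ℕ} (hpN : p ≤ N) :
    prolateS N p N * prolateS N p N = (N : ℝ) • prolateS N p N := by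
  apply map_injective ofReal_injective
  change (prolateS N p N * prolateS N p N).map ofRealHom =
    ((N : ℝ) • prolateS N p N).map ofRealHom
  rw [Matrix.map_mul, ← prolateFactor_mul_conjTranspose, Matrix.mul_assoc,
    ← Matrix.mul_assoc _ (prolateFactor N p), conjTranspose_mul_prolateFactor hpN,
    Matrix.smul_mul, Matrix.one_mul, Matrix.mul_smul, prolateFactor_mul_conjTranspose]
  ext j k
  simp

theorem prolateS_q_eq_N_projection_general
    (N p : ℕ) (hN : 0 < N) (hpN : p ≤ N) :
    prolateS N p N * prolateS N p N = (N : ℝ) • prolateS N p N ∧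
    (prolateS N p N).IsSymm ∧
    (prolateS N p N).rank = p ∧
    (prolateS N p N).trace = (p : ℝ) * N := by
  have hN' : (N : ℝ) ≠ 0 := Nat.cast_ne_zero.2 hN.ne'
  have hS := prolateS_mul_self hpN
  have hrank := mul_rank_eq_trace_of_mul_self_eq_smul hN' hS
  rw [prolateS_trace, mul_comm] at hrank
  refine ⟨hS, prolateS_isSymm N p N, ?_, prolateS_trace N p N⟩
  exact_mod_cast mul_right_cancel₀ hN' hrank

/-- `(1/N)·S(p,N)` is an orthogonal projection: `S(p,N)² = N·S(p,N)` and `S(p,N)` is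
symmetric; moreover its rank equals `p` (equivalently `trace S(p,N) = pN`). -/
theorem prolateS_q_eq_N_projection
    (N p : ℕ) (hN : 0 < N) (hp1 : 1 ≤ p) (hpN : p ≤ N) :
    prolateS N p N * prolateS N p N = (N : ℝ) • prolateS N p N ∧
    (prolateS N p N).IsSymm ∧
    (prolateS N p N).rank = p ∧
    (prolateS N p N).trace = (p : ℝ) * N :=
  prolateS_q_eq_N_projection_general N p hN hpN
end
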